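/- Assume (λ₁,λ₂) belongs to the Unstable Regime. Let u₀∈H¹(ℝ³) satisfy E(u₀)<γ(‖u₀‖²_{L²}) and G(u₀)<0, and let u∈C((−T_min,T_max);H¹(ℝ³)) be the corresponding maximal solution of the GPE. Then there exists α>0 such that G(u(t)) ≤ −α‖∇u(t)‖²_{L²} for every t∈(−T_min,T_max). -/

import Mathlib

/-!
Mass and energy are conserved, so along the flow `G(u(t)) = 3E(u₀) − T(u(t))/2` is continuous
in `t`. It never vanishes, since `G(u(t)) = 0` would give `γ(M(u₀)) ≤ E(u(t)) = E(u₀)`; hence it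
stays negative. If `G(w) < 0`, a Galilean boost `e^{isx₁}w` leaves `|w|`, hence the mass and `P`,
unchanged and, by the intermediate value theorem in `s`, raises the kinetic energy to `−(3/2)P(w)`,
where `G` vanishes; comparing its energy `−P(w)/4` with `γ` gives `G(w) ≤ 2(E(w) − γ)`. So
`G(u(t)) ≤ −2(γ − E(u₀)) < 0` uniformly in `t`, and since `T = 6E(u₀) − 2G` this bound is a fixed
fraction of `−T(u(t))`.
-/

noncomputable section

open MeasureTheory Filter Real Set
open scoped ENNReal

abbrev E3 := EuclideanSpace ℝ (Fin 3)

/-- The dipolar kernel `K(x) = (x₁² + x₂² − 2x₃²)/|x|⁵`. -/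
def dipolarK (x : E3) : ℝ := ((x 0) ^ 2 + (x 1) ^ 2 - 2 * (x 2) ^ 2) / ‖x‖ ^ 5

/-- Convolution with the dipolar kernel, taken in the principal value sense. -/
def Kconv (f : E3 → ℝ) (x : E3) : ℝ :=
  limUnder (nhdsWithin (0 : ℝ) (Set.Ioi 0))
    (fun ε : ℝ => ∫ y in {y : E3 | ε ≤ ‖x - y‖}, dipolarK (x - y) * f y)

/-- Membership in `H¹(ℝ³)`. -/
def MemH1 (u : E3 → ℂ) : Prop :=
  MemLp u 2 (volume : Measure E3) ∧ (∀ᵐ x : E3 ∂volume, DifferentiableAt ℝ u x) ∧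
    MemLp (fun x => fderiv ℝ u x) 2 (volume : Measure E3)

/-- The mass `M(u) = ∫ |u|²`. -/
def massI (u : E3 → ℂ) : ℝ := ∫ x : E3, ‖u x‖ ^ 2

/-- The kinetic energy `T(u) = ∫ |∇u|²`. -/
def kinT (u : E3 → ℂ) : ℝ := ∫ x : E3, ‖fderiv ℝ u x‖ ^ 2

/-- The potential energy `P(u) = ∫ (λ₁|u|⁴ + λ₂(K∗|u|²)|u|²)`. -/
def potP (l1 l2 : ℝ) (u : E3 → ℂ) : ℝ :=
  ∫ x : E3, (l1 * ‖u x‖ ^ 4 + l2 * Kconv (fun y => ‖u y‖ ^ 2) x * ‖u x‖ ^ 2)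

/-- The energy `E(u) = (1/2)∫ (|∇u|² + λ₁|u|⁴ + λ₂(K∗|u|²)|u|²)`. -/
def energyE (l1 l2 : ℝ) (u : E3 → ℂ) : ℝ := (1 / 2) * (kinT u + potP l1 l2 u)

/-- The functional `G(u) = T(u) + (3/2)P(u)`. -/
def funcG (l1 l2 : ℝ) (u : E3 → ℂ) : ℝ := kinT u + (3 / 2) * potP l1 l2 u

/-- The mountain pass level `γ(c) = inf {E(u) : u ∈ H¹, ‖u‖² = c, G(u) = 0}`. -/
def gammaMP (l1 l2 c : ℝ) : ℝ :=
  sInf {e : ℝ | ∃ u : E3 → ℂ, MemH1 u ∧ massI u = c ∧ funcG l1 l2 u = 0 ∧ e = energyE l1 l2 u}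

/-- The Unstable Regime. -/
def UnstableRegime (l1 l2 : ℝ) : Prop :=
  (0 < l2 → l1 - (4 * π / 3) * l2 < 0) ∧ (l2 ≤ 0 → l1 + (8 * π / 3) * l2 < 0)

/-- The time interval `(-Tmin, Tmax)`. -/
def maxInterval (Tmin Tmax : ℝ≥0∞) : Set ℝ :=
  {t : ℝ | ENNReal.ofReal (-t) < Tmin ∧ ENNReal.ofReal t < Tmax}

/-- The Laplacian on `ℝ³`. -/
def lap3 (u : E3 → ℂ) (x : E3) : ℂ :=
  ∑ i : Fin 3, fderiv ℝ (fun y => fderiv ℝ u y (EuclideanSpace.single i 1)) x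
    (EuclideanSpace.single i 1)

/-- `u` is a solution of the dipolar Gross–Pitaevskii equation
`i∂ₜu + (1/2)Δu = λ₁|u|²u + λ₂(K∗|u|²)u` on the time interval `(-Tmin, Tmax)`,
belonging to `C((-Tmin,Tmax); H¹(ℝ³))`, with conserved mass and energy. -/
structure IsGPESolution (l1 l2 : ℝ) (Tmin Tmax : ℝ≥0∞) (u : ℝ → E3 → ℂ) : Prop where
  Tmin_pos : 0 < Tmin
  Tmax_pos : 0 < Tmax
  memH1 : ∀ t ∈ maxInterval Tmin Tmax, MemH1 (u t)
  continuousH1 : ∀ t₀ ∈ maxInterval Tmin Tmax,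
    Filter.Tendsto
      (fun t : ℝ =>
        eLpNorm (fun x => u t x - u t₀ x) 2 (volume : Measure E3) +
          eLpNorm (fun x => fderiv ℝ (u t) x - fderiv ℝ (u t₀) x) 2 (volume : Measure E3))
      (nhdsWithin t₀ (maxInterval Tmin Tmax)) (nhds 0)
  eqn : ∀ t ∈ maxInterval Tmin Tmax, ∀ x : E3,
    Complex.I * deriv (fun s : ℝ => u s x) t + (1 / 2 : ℂ) * lap3 (u t) x =
      (l1 : ℂ) * (‖u t x‖ : ℂ) ^ 2 * u t x +
        (l2 : ℂ) * (Kconv (fun y => ‖u t y‖ ^ 2) x : ℂ) * u t x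
  mass_conservation : ∀ t ∈ maxInterval Tmin Tmax, massI (u t) = massI (u 0)
  energy_conservation : ∀ t ∈ maxInterval Tmin Tmax, energyE l1 l2 (u t) = energyE l1 l2 (u 0)

/-- `u` is the maximal solution of the GPE on `(-Tmin, Tmax)`: it is a solution, and any
solution with the same initial datum has a smaller existence interval. -/
def IsMaximalGPESolution (l1 l2 : ℝ) (Tmin Tmax : ℝ≥0∞) (u : ℝ → E3 → ℂ) : Prop :=
  IsGPESolution l1 l2 Tmin Tmax u ∧
    ∀ (Tmin' Tmax' : ℝ≥0∞) (v : ℝ → E3 → ℂ),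
      IsGPESolution l1 l2 Tmin' Tmax' v → v 0 = u 0 → Tmin' ≤ Tmin ∧ Tmax' ≤ Tmax

/-- `u` is cylindrically symmetric: it depends only on `|x̄|` and `x₃`. -/
def cylindricallySymmetric (u : E3 → ℂ) : Prop :=
  ∀ x y : E3, (x 0) ^ 2 + (x 1) ^ 2 = (y 0) ^ 2 + (y 1) ^ 2 → x 2 = y 2 → u x = u y

/-- Membership in `Σ₃`: cylindrically symmetric `H¹` functions with `x₃u ∈ L²`. -/
def MemSigma3 (u : E3 → ℂ) : Prop :=
  MemH1 u ∧ cylindricallySymmetric u ∧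
    MemLp (fun x : E3 => (x 2 : ℂ) * u x) 2 (volume : Measure E3)

open Topology

lemma exists_norm_add_smul_eq {F : Type*} [NormedAddCommGroup F] [NormedSpace ℝ F] {x y : F}
    (hy : ‖y‖ ≠ 0) {r : ℝ} (hr : ‖x‖ ≤ r) : ∃ s : ℝ, ‖x + s • y‖ = r := by
  set S := (r + ‖x‖) / ‖y‖
  have hS : 0 ≤ S := div_nonneg (by linarith [norm_nonneg x]) (norm_nonneg y)
  have hrS : r ≤ ‖x + S • y‖ := by
    have htri := norm_sub_le (x + S • y) x
    rw [add_sub_cancel_left, norm_smul, Real.norm_of_nonneg hS, div_mul_cancel₀ _ hy] at htri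
    linarith
  obtain ⟨s, -, hs⟩ := intermediate_value_Icc hS
    (by fun_prop : Continuous fun s : ℝ => ‖x + s • y‖).continuousOn ⟨by simpa using hr, hrS⟩
  exact ⟨s, hs⟩

lemma IsPreconnected.forall_neg_of_ne_zero {X : Type*} [TopologicalSpace X] {s : Set X}
    {f : X → ℝ} (hs : IsPreconnected s) (hf : ContinuousOn f s) (hf0 : ∀ x ∈ s, f x ≠ 0)
    {a : X} (ha : a ∈ s) (hfa : f a < 0) : ∀ x ∈ s, f x < 0 := by
  intro x hx
  by_contra! hfx
  obtain ⟨y, hy, hfy⟩ := hs.intermediate_value ha hx hf ⟨hfa.le, hfx⟩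
  exact hf0 y hy hfy

lemma exists_pos_le_neg_mul_of_le_neg {e δ : ℝ} (hδ : 0 < δ) :
    ∃ α : ℝ, 0 < α ∧ ∀ T : ℝ, 3 * e - T / 2 ≤ -(2 * δ) → 3 * e - T / 2 ≤ -α * T := by
  rcases le_or_gt e 0 with he | he
  · exact ⟨1 / 2, by norm_num, fun T _ => by linarith⟩
  · refine ⟨δ / (3 * e + 2 * δ), by positivity, fun T hT => ?_⟩
    rw [neg_mul, div_mul_eq_mul_div, le_neg, div_le_iff₀ (by positivity)]
    nlinarith

section LpNorm

variable {α E : Type*} [MeasurableSpace α] {μ : Measure α} [NormedAddCommGroup E] {p : ℝ≥0∞}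

lemma integral_norm_sq_eq_lpNorm_sq {f : α → E} (hf : AEStronglyMeasurable f μ) :
    ∫ x, ‖f x‖ ^ 2 ∂μ = lpNorm f 2 μ ^ 2 := by
  rw [lpNorm_eq_integral_norm_rpow_toReal two_ne_zero ENNReal.ofNat_ne_top hf,
    ← Real.rpow_natCast, ← Real.rpow_mul (integral_nonneg fun _ => by positivity)]
  norm_num

lemma abs_lpNorm_sub_lpNorm_le {f g : α → E} (hf : MemLp f p μ) (hg : MemLp g p μ) (hp : 1 ≤ p) :
    |lpNorm f p μ - lpNorm g p μ| ≤ lpNorm (f - g) p μ :=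
  abs_sub_le_iff.2 ⟨by linarith [lpNorm_le_lpNorm_add_lpNorm_sub' (f := f) hg hp],
    by linarith [lpNorm_le_lpNorm_add_lpNorm_sub (f := g) hf hp]⟩

lemma tendsto_lpNorm_of_tendsto_eLpNorm_sub {ι : Type*} {l : Filter ι} {F : ι → α → E}
    {f : α → E} (hp : 1 ≤ p) (hF : ∀ᶠ i in l, MemLp (F i) p μ) (hf : MemLp f p μ)
    (h : Tendsto (fun i => eLpNorm (F i - f) p μ) l (𝓝 0)) :
    Tendsto (fun i => lpNorm (F i) p μ) l (𝓝 (lpNorm f p μ)) := by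
  have h' : Tendsto (fun i => lpNorm (F i - f) p μ) l (𝓝 0) :=
    ((ENNReal.tendsto_toReal ENNReal.zero_ne_top).comp h).congr' <| hF.mono fun i hi =>
      toReal_eLpNorm (hi.sub hf).aestronglyMeasurable
  exact tendsto_iff_norm_sub_tendsto_zero.2 <| squeeze_zero' (.of_forall fun _ => norm_nonneg _)
    (hF.mono fun i hi => abs_lpNorm_sub_lpNorm_le hi hf hp) h'

lemma exists_lpNorm_add_smul_eq [NormedSpace ℝ E] [Fact (1 ≤ p)] {f g : α → E}
    (hf : MemLp f p μ) (hg : MemLp g p μ) (hg0 : lpNorm g p μ ≠ 0) {r : ℝ}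
    (hr : lpNorm f p μ ≤ r) : ∃ s : ℝ, lpNorm (f + s • g) p μ = r := by
  have hnorm : ∀ {h : α → E} (hh : MemLp h p μ), ‖hh.toLp h‖ = lpNorm h p μ := fun hh => by
    rw [Lp.norm_toLp, toReal_eLpNorm hh.aestronglyMeasurable]
  obtain ⟨s, hs⟩ := exists_norm_add_smul_eq (x := hf.toLp f) (y := hg.toLp g) (r := r)
    (by rwa [hnorm]) (by rwa [hnorm])
  refine ⟨s, ?_⟩
  rwa [← MemLp.toLp_const_smul, ← MemLp.toLp_add, hnorm] at hs

end LpNorm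

namespace GPE

lemma kinT_nonneg (w : E3 → ℂ) : 0 ≤ kinT w :=
  integral_nonneg fun _ => sq_nonneg _

def boostDir : E3 →L[ℝ] ℂ := Complex.I • (Complex.ofRealCLM ∘L EuclideanSpace.proj 0)

lemma boostDir_apply (x : E3) : boostDir x = Complex.I * x 0 := by
  simp [boostDir]

lemma norm_boostDir : ‖boostDir‖ = 1 := by
  refine le_antisymm (ContinuousLinearMap.opNorm_le_bound _ zero_le_one fun x => ?_) ?_
  · rw [boostDir_apply, norm_mul, Complex.norm_I, one_mul, Complex.norm_real, one_mul]
    exact PiLp.norm_apply_le x 0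
  · simpa [boostDir_apply] using boostDir.le_opNorm (EuclideanSpace.single 0 1)

lemma norm_exp_I_mul_ofReal_mul (a b : ℝ) : ‖Complex.exp (Complex.I * (a * b))‖ = 1 := by
  rw [mul_comm Complex.I, ← Complex.ofReal_mul, Complex.norm_exp_ofReal_mul_I]

def galileanBoost (s : ℝ) (w : E3 → ℂ) (x : E3) : ℂ :=
  Complex.exp (Complex.I * (s * x 0)) * w x

variable {w : E3 → ℂ}

lemma norm_galileanBoost (s : ℝ) (w : E3 → ℂ) (x : E3) : ‖galileanBoost s w x‖ = ‖w x‖ := by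
  rw [galileanBoost, norm_mul, norm_exp_I_mul_ofReal_mul, one_mul]

lemma hasFDerivAt_galileanBoost (s : ℝ) {x : E3} (hw : DifferentiableAt ℝ w x) :
    HasFDerivAt (galileanBoost s w)
      (Complex.exp (Complex.I * (s * x 0)) • (fderiv ℝ w x + s • w x • boostDir)) x := by
  have hphase : HasFDerivAt (fun y : E3 => Complex.exp (Complex.I * (s * y 0)))
      (Complex.exp (Complex.I * (s * x 0)) • s • boostDir) x := by
    have h := (s • boostDir).hasFDerivAt.cexp (x := x)
    simp only [smul_apply, boostDir_apply, Complex.real_smul] at h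
    simpa only [mul_left_comm] using h
  refine (hphase.mul hw.hasFDerivAt).congr_fderiv ?_
  rw [smul_add, smul_comm s (w x), smul_comm (w x)]

lemma massI_galileanBoost (s : ℝ) (w : E3 → ℂ) : massI (galileanBoost s w) = massI w := by
  simp only [massI, norm_galileanBoost]

lemma potP_galileanBoost (l1 l2 s : ℝ) (w : E3 → ℂ) :
    potP l1 l2 (galileanBoost s w) = potP l1 l2 w := by
  simp only [potP, norm_galileanBoost]

lemma memLp_smul_boostDir (hw : MemLp w 2 volume) :
    MemLp (fun x => w x • boostDir) 2 volume :=
  hw.congr_norm (hw.aestronglyMeasurable.smul_const _) <| .of_forall fun x => by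
    rw [norm_smul, norm_boostDir, mul_one]

lemma fderiv_galileanBoost_ae_eq (s : ℝ) (hw : MemH1 w) :
    fderiv ℝ (galileanBoost s w) =ᵐ[volume]
      fun x => Complex.exp (Complex.I * (s * x 0)) • (fderiv ℝ w x + s • w x • boostDir) :=
  hw.2.1.mono fun _ hx => (hasFDerivAt_galileanBoost s hx).fderiv

lemma memLp_fderiv_add_smul_boostDir (s : ℝ) (hw : MemH1 w) :
    MemLp (fun x => fderiv ℝ w x + s • w x • boostDir) 2 volume :=
  MemLp.add (ε := E3 →L[ℝ] ℂ) hw.2.2 ((memLp_smul_boostDir hw.1).const_smul s)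

lemma memH1_galileanBoost (s : ℝ) (hw : MemH1 w) : MemH1 (galileanBoost s w) := by
  have hphase : Continuous fun x : E3 => Complex.exp (Complex.I * (s * x 0)) := by fun_prop
  refine ⟨?_, hw.2.1.mono fun _ hx => (hasFDerivAt_galileanBoost s hx).differentiableAt, ?_⟩
  · exact hw.1.congr_norm (hphase.aestronglyMeasurable.mul hw.1.aestronglyMeasurable)
      (.of_forall fun x => (norm_galileanBoost s w x).symm)
  · have hW := memLp_fderiv_add_smul_boostDir s hw
    have hφW : MemLp (fun x => Complex.exp (Complex.I * (s * x 0)) •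
        (fderiv ℝ w x + s • w x • boostDir)) 2 volume :=
      hW.congr_norm (hphase.aestronglyMeasurable.smul hW.aestronglyMeasurable)
        (.of_forall fun x => by rw [norm_smul, norm_exp_I_mul_ofReal_mul, one_mul])
    exact hφW.ae_eq (fderiv_galileanBoost_ae_eq s hw).symm

lemma kinT_eq_lpNorm_sq (hw : MemH1 w) : kinT w = lpNorm (fun x => fderiv ℝ w x) 2 volume ^ 2 :=
  integral_norm_sq_eq_lpNorm_sq hw.2.2.aestronglyMeasurable

lemma kinT_galileanBoost (s : ℝ) (hw : MemH1 w) :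
    kinT (galileanBoost s w) =
      lpNorm ((fun x => fderiv ℝ w x) + s • fun x => w x • boostDir) 2 volume ^ 2 := by
  refine (integral_congr_ae ((fderiv_galileanBoost_ae_eq s hw).mono fun x hx => ?_)).trans
    (integral_norm_sq_eq_lpNorm_sq (memLp_fderiv_add_smul_boostDir s hw).aestronglyMeasurable)
  rw [hx, norm_smul, norm_exp_I_mul_ofReal_mul, one_mul]
  rfl

lemma exists_kinT_galileanBoost_eq (hw : MemH1 w) (hw0 : ¬w =ᵐ[volume] 0) {τ : ℝ}
    (hτ : kinT w ≤ τ) : ∃ s : ℝ, kinT (galileanBoost s w) = τ := by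
  have hB : lpNorm (fun x => w x • boostDir) 2 volume ≠ 0 := by
    rw [Ne, lpNorm_eq_zero (memLp_smul_boostDir hw.1) two_ne_zero]
    refine fun h => hw0 (h.mono fun x (hx : w x • boostDir = 0) => ?_)
    simpa [norm_smul, norm_boostDir] using congrArg norm hx
  have hτ0 : 0 ≤ τ := (kinT_nonneg w).trans hτ
  obtain ⟨s, hs⟩ := exists_lpNorm_add_smul_eq hw.2.2 (memLp_smul_boostDir hw.1) hB
    (Real.le_sqrt_of_sq_le ((kinT_eq_lpNorm_sq hw).symm.trans_le hτ))
  exact ⟨s, by rw [kinT_galileanBoost s hw, hs, Real.sq_sqrt hτ0]⟩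

variable {l1 l2 : ℝ}

lemma funcG_eq_three_mul_energyE_sub (l1 l2 : ℝ) (w : E3 → ℂ) :
    funcG l1 l2 w = 3 * energyE l1 l2 w - kinT w / 2 := by
  unfold funcG energyE
  ring

lemma potP_eq_zero_of_ae_eq_zero (l1 l2 : ℝ) (hw : w =ᵐ[volume] 0) : potP l1 l2 w = 0 :=
  integral_eq_zero_of_ae <| hw.mono fun _ hx => by simp [hx]

lemma gammaMP_le_energyE (hw : MemH1 w) (hG : funcG l1 l2 w = 0) :
    gammaMP l1 l2 (massI w) ≤ energyE l1 l2 w := by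
  refine csInf_le ⟨0, ?_⟩ ⟨w, hw, rfl, hG, rfl⟩
  rintro _ ⟨v, -, -, hv, rfl⟩
  linarith [funcG_eq_three_mul_energyE_sub l1 l2 v, kinT_nonneg v]

lemma funcG_le_two_mul_energyE_sub_gammaMP (hw : MemH1 w) (hG : funcG l1 l2 w < 0) :
    funcG l1 l2 w ≤ 2 * (energyE l1 l2 w - gammaMP l1 l2 (massI w)) := by
  have hw0 : ¬w =ᵐ[volume] 0 := fun h => by
    have : funcG l1 l2 w = kinT w := by simp [funcG, potP_eq_zero_of_ae_eq_zero l1 l2 h]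
    linarith [kinT_nonneg w]
  have hτ : kinT w ≤ -(3 / 2) * potP l1 l2 w := by unfold funcG at hG; linarith
  obtain ⟨s, hs⟩ := exists_kinT_galileanBoost_eq hw hw0 hτ
  have hγ := gammaMP_le_energyE (l1 := l1) (l2 := l2) (memH1_galileanBoost s hw)
    (by rw [funcG, hs, potP_galileanBoost]; ring)
  rw [massI_galileanBoost, energyE, hs, potP_galileanBoost] at hγ
  unfold funcG energyE
  linarith

end GPE

lemma ordConnected_maxInterval (Tmin Tmax : ℝ≥0∞) : (maxInterval Tmin Tmax).OrdConnected :=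
  ⟨fun _ hx _ hy _ hz => ⟨(ENNReal.ofReal_le_ofReal (neg_le_neg hz.1)).trans_lt hx.1,
    (ENNReal.ofReal_le_ofReal hz.2).trans_lt hy.2⟩⟩

namespace IsGPESolution

variable {l1 l2 : ℝ} {Tmin Tmax : ℝ≥0∞} {u : ℝ → E3 → ℂ}

lemma zero_mem_maxInterval (hu : IsGPESolution l1 l2 Tmin Tmax u) :
    (0 : ℝ) ∈ maxInterval Tmin Tmax := by
  simp [maxInterval, hu.Tmin_pos, hu.Tmax_pos]

lemma continuousOn_kinT (hu : IsGPESolution l1 l2 Tmin Tmax u) :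
    ContinuousOn (fun t => kinT (u t)) (maxInterval Tmin Tmax) := by
  refine ContinuousOn.congr (f := fun t => lpNorm (fun x => fderiv ℝ (u t) x) 2 volume ^ 2)
    (ContinuousOn.pow (fun t₀ ht₀ => ?_) 2) fun t ht => GPE.kinT_eq_lpNorm_sq (hu.memH1 t ht)
  refine tendsto_lpNorm_of_tendsto_eLpNorm_sub one_le_two
    (eventually_nhdsWithin_of_forall fun t ht => (hu.memH1 t ht).2.2) (hu.memH1 t₀ ht₀).2.2 ?_
  exact tendsto_of_tendsto_of_tendsto_of_le_of_le tendsto_const_nhds (hu.continuousH1 t₀ ht₀)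
    (fun _ => zero_le) fun _ => le_add_self

lemma funcG_eq (hu : IsGPESolution l1 l2 Tmin Tmax u) {t : ℝ} (ht : t ∈ maxInterval Tmin Tmax) :
    funcG l1 l2 (u t) = 3 * energyE l1 l2 (u 0) - kinT (u t) / 2 := by
  rw [GPE.funcG_eq_three_mul_energyE_sub, hu.energy_conservation t ht]

lemma funcG_neg (hu : IsGPESolution l1 l2 Tmin Tmax u)
    (hE : energyE l1 l2 (u 0) < gammaMP l1 l2 (massI (u 0))) (hG : funcG l1 l2 (u 0) < 0) :
    ∀ t ∈ maxInterval Tmin Tmax, funcG l1 l2 (u t) < 0 := by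
  refine (ordConnected_maxInterval Tmin Tmax).isPreconnected.forall_neg_of_ne_zero ?_
    (fun t ht hGt => ?_) hu.zero_mem_maxInterval hG
  · exact (continuousOn_const.sub (hu.continuousOn_kinT.div_const 2)).congr fun t ht =>
      hu.funcG_eq ht
  · have hγ := GPE.gammaMP_le_energyE (hu.memH1 t ht) hGt
    rw [hu.mass_conservation t ht, hu.energy_conservation t ht] at hγ
    exact hγ.not_gt hE

end IsGPESolution

theorem gpe_G_controls_gradient_general (l1 l2 : ℝ)
    (Tmin Tmax : ℝ≥0∞) (u : ℝ → E3 → ℂ)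
    (hsol : IsMaximalGPESolution l1 l2 Tmin Tmax u)
    (hE : energyE l1 l2 (u 0) < gammaMP l1 l2 (massI (u 0)))
    (hG : funcG l1 l2 (u 0) < 0) :
    ∃ α : ℝ, 0 < α ∧ ∀ t ∈ maxInterval Tmin Tmax, funcG l1 l2 (u t) ≤ -α * kinT (u t) := by
  obtain ⟨hu, -⟩ := hsol
  obtain ⟨α, hα, hbound⟩ := exists_pos_le_neg_mul_of_le_neg (e := energyE l1 l2 (u 0))
    (sub_pos.2 hE)
  refine ⟨α, hα, fun t ht => ?_⟩
  have hGt := GPE.funcG_le_two_mul_energyE_sub_gammaMP (hu.memH1 t ht) (hu.funcG_neg hE hG t ht)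
  rw [hu.mass_conservation t ht, hu.energy_conservation t ht] at hGt
  rw [hu.funcG_eq ht] at hGt ⊢
  exact hbound _ (by linarith)

/-- In the Unstable Regime, if `E(u₀) < γ(‖u₀‖²)` and `G(u₀) < 0`, then there exists `α > 0`
such that `G(u(t)) ≤ −α‖∇u(t)‖²_{L²}` for every `t` in the maximal existence interval. -/
theorem gpe_G_controls_gradient (l1 l2 : ℝ) (hUR : UnstableRegime l1 l2)
    (Tmin Tmax : ℝ≥0∞) (u : ℝ → E3 → ℂ)
    (hsol : IsMaximalGPESolution l1 l2 Tmin Tmax u)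
    (hE : energyE l1 l2 (u 0) < gammaMP l1 l2 (massI (u 0)))
    (hG : funcG l1 l2 (u 0) < 0) :
    ∃ α : ℝ, 0 < α ∧ ∀ t ∈ maxInterval Tmin Tmax, funcG l1 l2 (u t) ≤ -α * kinT (u t) :=
  gpe_G_controls_gradient_general l1 l2 Tmin Tmax u hsol hE hG
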